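/- arXiv:2308.02729 — 2 statements merged into one kernel-verified Lean document; each statement's English description precedes it below -/
import Mathlib

section
/- Define an oblique decision tree of depth n recursively: a leaf holds an affine function ℝᵈ → ℝ; an internal node holds (p, v) with p ∈ ℝᵈ, v ∈ ℝ, and two subtrees, and evaluates the left subtree at x if p·x + v ≤ 0, else the right subtree. Then for any one-hidden-layer ReLU network with n hidden units, there exists an oblique decision tree of depth n whose evaluation function equals the network's function on all of ℝᵈ. -/
noncomputable def ReLU (z : ℝ) : ℝ := max 0 z

/-- Oblique decision tree: leaves hold affine functions, internal nodes hold
an affine test `p·x + v ≤ 0`. -/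
inductive ObliqueTree (d : ℕ) where
  | leaf (p : Fin d → ℝ) (v : ℝ)
  | node (p : Fin d → ℝ) (v : ℝ) (l r : ObliqueTree d)

noncomputable def ObliqueTree.eval {d : ℕ} : ObliqueTree d → (Fin d → ℝ) → ℝ
  | .leaf p v, x => (∑ i, p i * x i) + v
  | .node p v l r, x =>
      if (∑ i, p i * x i) + v ≤ 0 then l.eval x else r.eval x

def ObliqueTree.depth {d : ℕ} : ObliqueTree d → ℕ
  | .leaf _ _ => 0
  | .node _ _ l r => max l.depth r.depth + 1

theorem relu_net_eq_oblique_tree {d n : ℕ}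
    (W : Fin n → Fin d → ℝ) (b : Fin n → ℝ) (v : Fin n → ℝ) (c : ℝ) :
    ∃ T : ObliqueTree d, T.depth = n ∧
      ∀ x : Fin d → ℝ,
        T.eval x = (∑ k, v k * ReLU ((∑ i, W k i * x i) + b k)) + c := by
  suffices h : ∀ (n : ℕ) (W : Fin n → Fin d → ℝ) (b v : Fin n → ℝ)
      (a : Fin d → ℝ) (c : ℝ),
      ∃ T : ObliqueTree d, T.depth = n ∧ ∀ x : Fin d → ℝ,
        T.eval x = (∑ k, v k * ReLU ((∑ i, W k i * x i) + b k)) +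
          ((∑ i, a i * x i) + c) by
    obtain ⟨T, hd, he⟩ := h n W b v 0 c
    refine ⟨T, hd, fun x => ?_⟩
    simpa using he x
  intro n
  induction n with
  | zero =>
    intro W b v a c
    refine ⟨.leaf a c, rfl, fun x => ?_⟩
    simp [ObliqueTree.eval]
  | succ m ih =>
    intro W b v a c
    obtain ⟨L, hLd, hLe⟩ := ih (fun k => W k.succ) (fun k => b k.succ)
      (fun k => v k.succ) a c
    obtain ⟨R, hRd, hRe⟩ := ih (fun k => W k.succ) (fun k => b k.succ)
      (fun k => v k.succ) (fun i => a i + v 0 * W 0 i) (c + v 0 * b 0)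
    refine ⟨.node (W 0) (b 0) L R, by simp [ObliqueTree.depth, hLd, hRd], fun x => ?_⟩
    rw [show (ObliqueTree.node (W 0) (b 0) L R).eval x
      = if (∑ i, W 0 i * x i) + b 0 ≤ 0 then L.eval x else R.eval x from rfl]
    rw [Fin.sum_univ_succ]
    split_ifs with h
    · rw [hLe x]
      have : ReLU ((∑ i, W 0 i * x i) + b 0) = 0 := by
        simp [ReLU, max_eq_left h]
      rw [this]
      ring
    · rw [hRe x]
      have : ReLU ((∑ i, W 0 i * x i) + b 0) = (∑ i, W 0 i * x i) + b 0 := by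
        simp [ReLU, max_eq_right (le_of_lt (not_le.mp h))]
      rw [this]
      have hsum : (∑ i, (a i + v 0 * W 0 i) * x i)
          = (∑ i, a i * x i) + v 0 * ∑ i, W 0 i * x i := by
        rw [Finset.mul_sum, ← Finset.sum_add_distrib]
        congr 1; ext i; ring
      rw [hsum]
      ring
end

section
/- A one-hidden-layer network with Leaky ReLU activations can be exactly represented by an oblique decision tree of depth n in which the leaf associated with pattern S ⊆ {1,…,n} computes x ↦ Σ_{k∈S} v_k (W_k·x + b_k) + Σ_{k∉S} v_k · a · (W_k·x + b_k) + c. -/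
/-!
Branch on the sign of one neuron at a time: once the sign of `W₀·x + b₀` is known, that
neuron contributes the affine function `v₀ (W₀·x + b₀)` or `v₀ a (W₀·x + b₀)`, which is
absorbed into the affine part computed at the leaves. Recursing on the remaining neurons
gives a tree of depth `n` whose leaves are indexed by activation patterns.
-/

noncomputable def LReLU (a z : ℝ) : ℝ := max z (a * z)

open Finset

lemma LReLU_of_nonpos {a z : ℝ} (ha1 : a ≤ 1) (hz : z ≤ 0) : LReLU a z = a * z :=
  max_eq_right (by nlinarith)

lemma LReLU_of_pos {a z : ℝ} (ha1 : a ≤ 1) (hz : 0 < z) : LReLU a z = z :=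
  max_eq_left (by nlinarith)

lemma LReLU_eq_ite {a : ℝ} (ha1 : a ≤ 1) (z : ℝ) :
    LReLU a z = if z ≤ 0 then a * z else z := by
  split_ifs with hz
  · exact LReLU_of_nonpos ha1 hz
  · exact LReLU_of_pos ha1 (not_le.mp hz)

lemma sum_mul_LReLU_eq_sum_filter {ι : Type*} (s : Finset ι) {a : ℝ} (ha1 : a ≤ 1)
    (v z : ι → ℝ) :
    ∑ k ∈ s, v k * LReLU a (z k) =
      (∑ k ∈ s.filter (fun k => z k > 0), v k * z k) +
      ∑ k ∈ s.filter (fun k => ¬(z k > 0)), v k * a * z k := by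
  rw [← sum_filter_add_sum_filter_not s (fun k => z k > 0)]
  congr 1
  · refine sum_congr rfl fun k hk => ?_
    rw [LReLU_of_pos ha1 (mem_filter.mp hk).2]
  · refine sum_congr rfl fun k hk => ?_
    rw [LReLU_of_nonpos ha1 (not_lt.mp (mem_filter.mp hk).2), mul_assoc]

lemma ObliqueTree.eval_node {d : ℕ} (p : Fin d → ℝ) (v : ℝ) (l r : ObliqueTree d)
    (x : Fin d → ℝ) :
    (ObliqueTree.node p v l r).eval x =
      if (∑ i, p i * x i) + v ≤ 0 then l.eval x else r.eval x :=
  rfl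

theorem ObliqueTree.exists_depth_eq_eval_eq_affine_add_net {d : ℕ} {a : ℝ} (ha1 : a ≤ 1) :
    ∀ (n : ℕ) (W : Fin n → Fin d → ℝ) (b v : Fin n → ℝ) (q : Fin d → ℝ) (r : ℝ),
    ∃ T : ObliqueTree d, T.depth = n ∧ ∀ x : Fin d → ℝ,
      T.eval x = (∑ i, q i * x i) + r + ∑ k, v k * LReLU a ((∑ i, W k i * x i) + b k) := by
  intro n
  induction n with
  | zero =>
    intro W b v q r
    exact ⟨.leaf q r, rfl, fun x => by simp [ObliqueTree.eval]⟩
  | succ n ih =>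
    intro W b v q r
    obtain ⟨T₁, hd₁, he₁⟩ := ih (fun k => W k.succ) (fun k => b k.succ) (fun k => v k.succ)
      (fun i => q i + v 0 * a * W 0 i) (r + v 0 * a * b 0)
    obtain ⟨T₂, hd₂, he₂⟩ := ih (fun k => W k.succ) (fun k => b k.succ) (fun k => v k.succ)
      (fun i => q i + v 0 * W 0 i) (r + v 0 * b 0)
    refine ⟨.node (W 0) (b 0) T₁ T₂, by simp [ObliqueTree.depth, hd₁, hd₂], fun x => ?_⟩
    rw [eval_node, Fin.sum_univ_succ, LReLU_eq_ite ha1]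
    split_ifs
    · rw [he₁]
      simp only [add_mul, sum_add_distrib, mul_assoc, ← mul_sum]
      ring
    · rw [he₂]
      simp only [add_mul, sum_add_distrib, mul_assoc, ← mul_sum]
      ring

theorem leaky_relu_net_eq_oblique_tree_general {d n : ℕ} (a : ℝ) (ha1 : a < 1)
    (W : Fin n → Fin d → ℝ) (b : Fin n → ℝ) (v : Fin n → ℝ) (c : ℝ) :
    ∃ T : ObliqueTree d, T.depth = n ∧
      ∀ x : Fin d → ℝ,
        T.eval x = (∑ k, v k * LReLU a ((∑ i, W k i * x i) + b k)) + c ∧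
        T.eval x =
          (∑ k ∈ Finset.univ.filter (fun k => (∑ i, W k i * x i) + b k > 0),
              v k * ((∑ i, W k i * x i) + b k)) +
          (∑ k ∈ Finset.univ.filter (fun k => ¬((∑ i, W k i * x i) + b k > 0)),
              v k * a * ((∑ i, W k i * x i) + b k)) + c := by
  obtain ⟨T, hdepth, heval⟩ :=
    ObliqueTree.exists_depth_eq_eval_eq_affine_add_net ha1.le n W b v 0 c
  have hnet : ∀ x, T.eval x = (∑ k, v k * LReLU a ((∑ i, W k i * x i) + b k)) + c := by
    intro x
    rw [heval x]
    simp only [Pi.zero_apply, zero_mul, sum_const_zero, zero_add]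
    ring
  refine ⟨T, hdepth, fun x => ⟨hnet x, ?_⟩⟩
  rw [hnet x, sum_mul_LReLU_eq_sum_filter univ ha1.le v (fun k => (∑ i, W k i * x i) + b k)]

/-- A one-hidden-layer Leaky-ReLU network is exactly represented by a depth-`n`
oblique tree whose leaf for the realized pattern `S` computes
`∑_{k∈S} v_k (W_k·x + b_k) + ∑_{k∉S} v_k a (W_k·x + b_k) + c`. -/
theorem leaky_relu_net_eq_oblique_tree {d n : ℕ} (a : ℝ) (ha : 0 < a) (ha1 : a < 1)
    (W : Fin n → Fin d → ℝ) (b : Fin n → ℝ) (v : Fin n → ℝ) (c : ℝ) :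
    ∃ T : ObliqueTree d, T.depth = n ∧
      ∀ x : Fin d → ℝ,
        T.eval x = (∑ k, v k * LReLU a ((∑ i, W k i * x i) + b k)) + c ∧
        T.eval x =
          (∑ k ∈ Finset.univ.filter (fun k => (∑ i, W k i * x i) + b k > 0),
              v k * ((∑ i, W k i * x i) + b k)) +
          (∑ k ∈ Finset.univ.filter (fun k => ¬((∑ i, W k i * x i) + b k > 0)),
              v k * a * ((∑ i, W k i * x i) + b k)) + c :=
  leaky_relu_net_eq_oblique_tree_general a ha1 W b v c
end
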